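/- For every integer k ≥ 1, one has e^{7/8} < k!/((k/e)^k · √k) ≤ e. -/
import Mathlib

open Real Filter Topology

lemma stirlingSeq_ge_sqrt_pi (k : ℕ) (hk : 1 ≤ k) : Real.sqrt Real.pi ≤ Stirling.stirlingSeq k := by
  obtain ⟨n, rfl⟩ := Nat.exists_eq_add_of_le hk
  have ht : Tendsto (Stirling.stirlingSeq ∘ Nat.succ) atTop (𝓝 (Real.sqrt Real.pi)) := by
    rw [show Stirling.stirlingSeq ∘ Nat.succ = fun n => Stirling.stirlingSeq (n + 1) from rfl]
    exact (Filter.tendsto_add_atTop_iff_nat 1).mpr Stirling.tendsto_stirlingSeq_sqrt_pi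
  have := Stirling.stirlingSeq'_antitone.le_of_tendsto ht n
  simpa [Nat.succ_eq_add_one, add_comm] using this

lemma stirlingSeq_le_one (k : ℕ) (hk : 1 ≤ k) :
    Stirling.stirlingSeq k ≤ Real.exp 1 / Real.sqrt 2 := by
  obtain ⟨n, rfl⟩ := Nat.exists_eq_add_of_le hk
  have := Stirling.stirlingSeq'_antitone (Nat.zero_le n)
  simp only [Function.comp] at this
  rw [← Stirling.stirlingSeq_one]
  simpa [Nat.succ_eq_add_one, add_comm] using this

lemma ratio_eq (k : ℕ) (hk : 1 ≤ k) :
    (k.factorial : ℝ) / (((k : ℝ) / Real.exp 1) ^ k * Real.sqrt k)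
      = Real.sqrt 2 * Stirling.stirlingSeq k := by
  have hk0 : (0:ℝ) < k := by exact_mod_cast hk
  rw [Stirling.stirlingSeq, Real.sqrt_mul (by norm_num) (k:ℝ)]
  have h1 : Real.sqrt 2 ≠ 0 := by positivity
  have h2 : Real.sqrt (k:ℝ) ≠ 0 := by positivity
  have h3 : ((k:ℝ) / Real.exp 1) ^ k ≠ 0 := by positivity
  field_simp

theorem stirling_bounds (k : ℕ) (hk : 1 ≤ k) :
    Real.exp (7/8) < (k.factorial : ℝ) / (((k : ℝ) / Real.exp 1) ^ k * Real.sqrt k) ∧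
    (k.factorial : ℝ) / (((k : ℝ) / Real.exp 1) ^ k * Real.sqrt k) ≤ Real.exp 1 := by
  rw [ratio_eq k hk]
  constructor
  · have h1 : Real.exp (7/8) < 2.4 := by
      have h8 : Real.exp (7/8) ^ 8 = Real.exp 1 ^ 7 := by
        rw [← Real.exp_nat_mul, ← Real.exp_nat_mul]; norm_num
      have he : Real.exp 1 < 2.7182818286 := Real.exp_one_lt_d9
      have : Real.exp (7/8) ^ 8 < 2.4 ^ 8 := by
        rw [h8]
        calc Real.exp 1 ^ 7 < 2.7182818286 ^ 7 :=
              pow_lt_pow_left₀ he (Real.exp_pos 1).le (by norm_num)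
          _ < 2.4 ^ 8 := by norm_num
      exact lt_of_pow_lt_pow_left₀ 8 (by norm_num) this
    have h2 : (2.4:ℝ) ≤ Real.sqrt 2 * Real.sqrt Real.pi := by
      rw [← Real.sqrt_mul (by norm_num)]
      have : (5.76:ℝ) ≤ 2 * Real.pi := by nlinarith [Real.pi_gt_three]
      calc (2.4:ℝ) = Real.sqrt 5.76 := by
            rw [show (5.76:ℝ) = 2.4^2 by norm_num, Real.sqrt_sq (by norm_num)]
        _ ≤ Real.sqrt (2 * Real.pi) := Real.sqrt_le_sqrt this
    calc Real.exp (7/8) < 2.4 := h1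
      _ ≤ Real.sqrt 2 * Real.sqrt Real.pi := h2
      _ ≤ Real.sqrt 2 * Stirling.stirlingSeq k := by
          have := stirlingSeq_ge_sqrt_pi k hk
          nlinarith [Real.sqrt_nonneg (2:ℝ)]
  · have h := stirlingSeq_le_one k hk
    have hs : (0:ℝ) < Real.sqrt 2 := by positivity
    calc Real.sqrt 2 * Stirling.stirlingSeq k ≤ Real.sqrt 2 * (Real.exp 1 / Real.sqrt 2) := by
          nlinarith
      _ = Real.exp 1 := by field_simp
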